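/- arXiv:2405.17565 — 4 statements merged into one kernel-verified Lean document; each statement's English description precedes it below -/
import Mathlib

section
/- Let L, M ⊆ (Z/d)^{2n} be Lagrangian subspaces and g ∈ L*, h ∈ M* linear functionals. Then the Hilbert-Schmidt inner product of the corresponding stabilizer states is tr(Π_L^g Π_M^h) = d^{dim(L∩M) − n} if g and h agree on L ∩ M, and 0 otherwise. -/
open Matrix

/-- The phase space `(ℤ/d)^{2n}` as pairs `(a_X, a_Z)`. -/
abbrev PS (d n : ℕ) := (Fin n → ZMod d) × (Fin n → ZMod d)

/-- `ω = exp(2πi/d)`. -/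
noncomputable def omegaC (d : ℕ) : ℂ := Complex.exp (2 * Real.pi * Complex.I / d)

/-- `ω^k` for an exponent `k : ℤ/d`. -/
noncomputable def chi (d : ℕ) (k : ZMod d) : ℂ := omegaC d ^ k.val

/-- Dot product over `ℤ/d`. -/
def dotZ {d n : ℕ} (x y : Fin n → ZMod d) : ZMod d := ∑ i, x i * y i

/-- The standard symplectic form `[a,b] = a_X·b_Z − b_X·a_Z`. -/
def symp {d n : ℕ} (a b : PS d n) : ZMod d := dotZ a.1 b.2 - dotZ b.1 a.2

/-- The Weyl-Heisenberg operator `T(a) = τ^{-a_X·a_Z} ⨂ᵢ Z^{(a_Z)_i} X^{(a_X)_i}`,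
where `τ = ω^{(d+1)/2} = ω^{2⁻¹ mod d}` for odd `d`. -/
noncomputable def WH (d n : ℕ) (a : PS d n) :
    Matrix (Fin n → ZMod d) (Fin n → ZMod d) ℂ :=
  Matrix.of fun q q' =>
    if q = q' + a.1 then chi d ((2⁻¹ : ZMod d) * (-(dotZ a.1 a.2)) + dotZ a.2 q) else 0

/-- An isotropic subspace of dimension `n`, i.e. a Lagrangian subspace. -/
def IsLagrangian (d n : ℕ) (L : Submodule (ZMod d) (PS d n)) : Prop :=
  (∀ a ∈ L, ∀ b ∈ L, symp a b = 0) ∧ Module.finrank (ZMod d) L = n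

/-- The stabilizer projection `Π_L^g = d^{-n} Σ_{b∈L} ω^{g(b)} T(b)`. -/
noncomputable def stabProj (d n : ℕ) [Fact d.Prime]
    (L : Submodule (ZMod d) (PS d n)) (g : L →ₗ[ZMod d] ZMod d) :
    Matrix (Fin n → ZMod d) (Fin n → ZMod d) ℂ :=
  letI : Fintype L := Fintype.ofFinite L
  ((d : ℂ) ^ n)⁻¹ • ∑ b : L, chi d (g b) • WH d n (b : PS d n)

/-!
The Weyl-Heisenberg operators satisfy `T(a) T(b) = ω^{[b,a]/2} T(a + b)` (here `2` must be
invertible mod `d`) and `tr T(c) = d^n δ_{c,0}`, by orthogonality of the characters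
`q ↦ ω^{c_Z · q}`. Expanding both projections, only the pairs `(a, -a)` with `a ∈ L ∩ M`
contribute to `tr(Π_L^g Π_M^h)`, each with weight `d^{-n} ω^{g(a) - h(a)}`; orthogonality of
characters on `L ∩ M` then gives `|L ∩ M| d^{-n}` or `0`.
-/

section Character

variable {d : ℕ} [NeZero d]

lemma chi_eq_stdAddChar (k : ZMod d) : chi d k = ZMod.stdAddChar k := by
  rw [chi, omegaC, ← Complex.exp_nat_mul, ZMod.stdAddChar_apply, ZMod.toCircle_apply]
  ring_nf

lemma chi_zero : chi d 0 = 1 := by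
  simp [chi_eq_stdAddChar]

lemma chi_add (x y : ZMod d) : chi d (x + y) = chi d x * chi d y := by
  simp only [chi_eq_stdAddChar, AddChar.map_add_eq_mul]

lemma sum_chi_eq_ite {V F : Type*} [AddCommGroup V] [Fintype V] [FunLike F V (ZMod d)]
    [AddMonoidHomClass F V (ZMod d)] (φ : F) [Decidable (∀ x, φ x = 0)] :
    ∑ x, chi d (φ x) = if ∀ x, φ x = 0 then (Fintype.card V : ℂ) else 0 := by
  set ψ := ZMod.stdAddChar.compAddMonoidHom (φ : V →+ ZMod d)
  have hψ : ψ = 0 ↔ ∀ x, φ x = 0 := by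
    rw [AddChar.eq_zero_iff]
    refine forall_congr' fun x => ?_
    rw [AddChar.compAddMonoidHom_apply, ← ZMod.injective_stdAddChar.eq_iff,
      AddChar.map_zero_eq_one, AddMonoidHom.coe_coe]
  calc ∑ x, chi d (φ x) = ∑ x, ψ x := by
        simp only [ψ, chi_eq_stdAddChar, AddChar.compAddMonoidHom_apply, AddMonoidHom.coe_coe]
    _ = _ := by rw [AddChar.sum_eq_ite]; exact if_congr hψ rfl rfl

end Character

section WeylHeisenberg

variable {d n : ℕ}

lemma dotZ_eq_dotProduct (x y : Fin n → ZMod d) : dotZ x y = x ⬝ᵥ y := rfl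

lemma two_mul_inv_two_of_odd (hodd : Odd d) : (2 : ZMod d) * 2⁻¹ = 1 := by
  exact_mod_cast ZMod.coe_mul_inv_eq_one 2 hodd.coprime_two_left

lemma WH_apply (a : PS d n) (q q' : Fin n → ZMod d) :
    WH d n a q q' = if q = q' + a.1 then chi d (2⁻¹ * -(a.1 ⬝ᵥ a.2) + a.2 ⬝ᵥ q) else 0 :=
  rfl

lemma WH_mul_WH [NeZero d] (hodd : Odd d) (a b : PS d n) :
    WH d n a * WH d n b = chi d (2⁻¹ * symp b a) • WH d n (a + b) := by
  ext q r
  rw [mul_apply, Finset.sum_eq_single (r + b.1)]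
  · by_cases hq : q = r + b.1 + a.1
    · subst hq
      simp only [WH_apply, Matrix.smul_apply, smul_eq_mul, Prod.fst_add, Prod.snd_add, add_assoc,
        add_comm b.1 a.1, if_true, ← chi_add]
      congr 1
      simp only [symp, dotZ_eq_dotProduct, dotProduct_add, add_dotProduct]
      linear_combination (a.1 ⬝ᵥ b.2) * two_mul_inv_two_of_odd hodd -
        dotProduct_comm b.2 a.1
    · have hq' : q ≠ r + (a.1 + b.1) := by rwa [add_comm a.1, ← add_assoc]
      simp [WH_apply, hq, hq']
  · intro q' _ hq'
    simp [WH_apply, hq']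
  · simp

lemma sum_chi_dotProduct [NeZero d] (c : Fin n → ZMod d) :
    ∑ q, chi d (c ⬝ᵥ q) = if c = 0 then (d : ℂ) ^ n else 0 := by
  simpa [dotProduct_eq_zero_iff] using
    sum_chi_eq_ite (AddMonoidHom.mk' (c ⬝ᵥ ·) (dotProduct_add c))

lemma trace_WH [NeZero d] (c : PS d n) : (WH d n c).trace = if c = 0 then (d : ℂ) ^ n else 0 := by
  by_cases hc : c.1 = 0
  · simp [trace, WH_apply, hc, sum_chi_dotProduct, Prod.ext_iff]
  · simp [trace, WH_apply, hc, Prod.ext_iff]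

lemma trace_WH_mul_WH [NeZero d] (hodd : Odd d) (a b : PS d n) :
    (WH d n a * WH d n b).trace = if a + b = 0 then (d : ℂ) ^ n else 0 := by
  rw [WH_mul_WH hodd, trace_smul, trace_WH]
  split_ifs with hab
  · rw [eq_neg_of_add_eq_zero_right hab]
    simp [symp, dotZ_eq_dotProduct, chi_zero]
  · rw [smul_zero]

end WeylHeisenberg

namespace Submodule

variable {R V : Type*} [Ring R] [AddCommGroup V] [Module R V]

lemma sum_sum_ite_add_eq_zero {β : Type*} [AddCommMonoid β] [DecidableEq V] (L M : Submodule R V)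
    [Fintype L] [Fintype M] [Fintype ↥(L ⊓ M)] (F : L → M → β) :
    ∑ a : L, ∑ b : M, (if (a : V) + b = 0 then F a b else 0) =
      ∑ x : ↥(L ⊓ M), F (inclusion inf_le_left x) (-(inclusion inf_le_right x)) := by
  rw [← Fintype.sum_prod_type', ← Finset.sum_filter]
  symm
  refine Finset.sum_bij (fun x _ => (inclusion inf_le_left x, -inclusion inf_le_right x))
    (fun x _ => by simp) (fun x _ y _ hxy => ?_) (fun p hp => ?_) (fun _ _ => rfl)
  · exact inclusion_injective _ (congrArg Prod.fst hxy)
  · obtain ⟨⟨a, ha⟩, ⟨b, hb⟩⟩ := p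
    have hba : b = -a := eq_neg_of_add_eq_zero_right (Finset.mem_filter.mp hp).2
    subst hba
    exact ⟨⟨a, ha, neg_neg a ▸ M.neg_mem hb⟩, Finset.mem_univ _,
      Prod.ext rfl (Subtype.ext rfl)⟩

variable {W : Type*} [AddCommGroup W] [Module R W] {L M : Submodule R V}

def infSub (g : L →ₗ[R] W) (h : M →ₗ[R] W) : ↥(L ⊓ M) →ₗ[R] W :=
  g ∘ₗ inclusion inf_le_left - h ∘ₗ inclusion inf_le_right

lemma infSub_apply (g : L →ₗ[R] W) (h : M →ₗ[R] W) (x : ↥(L ⊓ M)) :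
    infSub g h x = g (inclusion inf_le_left x) - h (inclusion inf_le_right x) :=
  rfl

lemma forall_infSub_eq_zero_iff (g : L →ₗ[R] W) (h : M →ₗ[R] W) :
    (∀ x, infSub g h x = 0) ↔
      ∀ (b : V) (hbL : b ∈ L) (hbM : b ∈ M), g ⟨b, hbL⟩ = h ⟨b, hbM⟩ :=
  ⟨fun H b hbL hbM => sub_eq_zero.mp (H ⟨b, hbL, hbM⟩),
    fun H x => sub_eq_zero.mpr (H x x.2.1 x.2.2)⟩

end Submodule

lemma trace_stabProj_mul_stabProj {d n : ℕ} [Fact d.Prime] (hodd : Odd d) (L M : Submodule (ZMod d) (PS d n))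
    [Fintype ↥(L ⊓ M)] (g : L →ₗ[ZMod d] ZMod d) (h : M →ₗ[ZMod d] ZMod d) :
    (stabProj d n L g * stabProj d n M h).trace =
      ((d : ℂ) ^ n)⁻¹ * ∑ x, chi d (Submodule.infSub g h x) := by
  have hd : (d : ℂ) ≠ 0 := Nat.cast_ne_zero.mpr (NeZero.ne d)
  rw [stabProj, stabProj, smul_mul, Matrix.mul_smul, trace_smul, trace_smul, Matrix.sum_mul,
    trace_sum]
  simp only [Matrix.mul_sum, trace_sum, smul_mul, Matrix.mul_smul, trace_smul,
    trace_WH_mul_WH hodd, smul_eq_mul, mul_ite, mul_zero]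
  rw [Submodule.sum_sum_ite_add_eq_zero]
  simp only [Submodule.infSub_apply, map_neg, sub_eq_add_neg, chi_add]
  field_simp
  rw [Finset.mul_sum]
  exact Finset.sum_congr rfl fun x _ => by ring

open scoped Classical in
theorem stabProj_overlap_general (d n : ℕ) [Fact d.Prime] (hodd : Odd d)
    (L M : Submodule (ZMod d) (PS d n))
    (g : L →ₗ[ZMod d] ZMod d) (h : M →ₗ[ZMod d] ZMod d) :
    (stabProj d n L g * stabProj d n M h).trace =
      if ∀ (b : PS d n) (hbL : b ∈ L) (hbM : b ∈ M), g ⟨b, hbL⟩ = h ⟨b, hbM⟩ then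
        (d : ℂ) ^ (Module.finrank (ZMod d) ↥(L ⊓ M)) / (d : ℂ) ^ n
      else 0 := by
  rw [trace_stabProj_mul_stabProj hodd, sum_chi_eq_ite, Module.card_eq_pow_finrank (K := ZMod d),
    ZMod.card]
  simp only [Submodule.forall_infSub_eq_zero_iff]
  split_ifs <;> simp [div_eq_inv_mul]

open scoped Classical in
theorem stabProj_overlap (d n : ℕ) [Fact d.Prime] (hodd : Odd d)
    (L M : Submodule (ZMod d) (PS d n))
    (hL : IsLagrangian d n L) (hM : IsLagrangian d n M)
    (g : L →ₗ[ZMod d] ZMod d) (h : M →ₗ[ZMod d] ZMod d) :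
    (stabProj d n L g * stabProj d n M h).trace =
      if ∀ (b : PS d n) (hbL : b ∈ L) (hbM : b ∈ M), g ⟨b, hbL⟩ = h ⟨b, hbM⟩ then
        (d : ℂ) ^ (Module.finrank (ZMod d) ↥(L ⊓ M)) / (d : ℂ) ^ n
      else 0 :=
  stabProj_overlap_general d n hodd L M g h
end

section
/- For any linear map R on (Z/d)^{2n} (d prime, n ≥ 1), if R is invertible and maps Lagrangian subspaces to Lagrangian subspaces, then R preserves symplectic orthogonality: [a,b] = 0 iff [Ra, Rb] = 0; hence R is a symplectic similitude. -/
open Matrix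

/-!
Two orthogonal vectors span an isotropic subspace, and for an alternating form every isotropic
subspace grows, one vector of its orthogonal at a time, into a self-orthogonal (Lagrangian) one.
Hence `R` maps orthogonal pairs to orthogonal pairs, i.e. the form `(a, b) ↦ [Ra, Rb]` vanishes
wherever `[·,·]` does. Two such forms are proportional: comparing `[Ra, Rb] / [a, b]` with
`[Ra', Rb'] / [a', b']` through a `w` with `[a, w] ≠ 0 ≠ [a', w]` shows that the ratio is
constant.
The constant is nonzero because `R` is onto and `[·,·]` is not identically zero.
-/

open Module

namespace LinearMap

variable {K M N : Type*} [Field K] [AddCommGroup M] [Module K M] [AddCommGroup N] [Module K N]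

theorem exists_apply_ne_zero_and_apply_ne_zero {f g : N →ₗ[K] K} {b b' : N} (hb : f b ≠ 0)
    (hb' : g b' ≠ 0) : ∃ w, f w ≠ 0 ∧ g w ≠ 0 := by
  by_cases hgb : g b = 0
  · by_cases hfb' : f b' = 0
    · exact ⟨b + b', by simpa [hfb'] using hb, by simpa [hgb] using hb'⟩
    · exact ⟨b', hfb', hb'⟩
  · exact ⟨b, hb, hgb⟩

variable {B B' : M →ₗ[K] N →ₗ[K] K}

theorem mul_apply_eq_mul_apply_of_forall_apply_eq_zero_imp
    (hBB' : ∀ a b, B a b = 0 → B' a b = 0) (a : M) (b b' : N) :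
    B a b' * B' a b = B a b * B' a b' := by
  have horth : B a (B a b' • b - B a b • b') = 0 := by
    simp only [map_sub, map_smul, smul_eq_mul]
    ring
  have h' := hBB' a _ horth
  simp only [map_sub, map_smul, smul_eq_mul] at h'
  linear_combination h'

theorem apply_mul_apply_eq_of_forall_apply_eq_zero_imp
    (hBB' : ∀ a b, B a b = 0 → B' a b = 0) {a a' : M} {b b' : N} (hab : B a b ≠ 0)
    (hab' : B a' b' ≠ 0) : B' a b * B a' b' = B' a' b' * B a b := by
  obtain ⟨w, haw, ha'w⟩ := exists_apply_ne_zero_and_apply_ne_zero hab hab'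
  have e₁ := mul_apply_eq_mul_apply_of_forall_apply_eq_zero_imp hBB' a b w
  have e₂ := mul_apply_eq_mul_apply_of_forall_apply_eq_zero_imp (B := B.flip) (B' := B'.flip)
    (fun x y => hBB' y x) w a a'
  have e₃ := mul_apply_eq_mul_apply_of_forall_apply_eq_zero_imp hBB' a' b' w
  simp only [flip_apply] at e₂
  refine mul_right_cancel₀ (mul_ne_zero haw ha'w) ?_
  linear_combination (B a' b' * B a' w) * e₁ + (B a b * B a' b') * e₂ - (B a b * B a w) * e₃

theorem exists_eq_smul_of_forall_apply_eq_zero_imp (hBB' : ∀ a b, B a b = 0 → B' a b = 0) :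
    ∃ α : K, B' = α • B := by
  by_cases hB : ∃ a b, B a b ≠ 0
  · obtain ⟨a₀, b₀, hab₀⟩ := hB
    refine ⟨B' a₀ b₀ / B a₀ b₀, ext₂ fun a b => ?_⟩
    rw [smul_apply, smul_apply, smul_eq_mul]
    by_cases hab : B a b = 0
    · rw [hab, hBB' a b hab, mul_zero]
    · rw [div_mul_eq_mul_div, eq_div_iff hab₀]
      exact apply_mul_apply_eq_of_forall_apply_eq_zero_imp hBB' hab hab₀
  · push Not at hB
    exact ⟨0, ext₂ fun a b => by simp [hBB' a b (hB a b)]⟩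

end LinearMap

namespace LinearMap.BilinForm

variable {R M : Type*} [CommRing R] [AddCommGroup M] [Module R M] {B : LinearMap.BilinForm R M}

theorem sup_span_singleton_le_orthogonal (hB : B.IsAlt) {W : Submodule R M}
    (hW : W ≤ B.orthogonal W) {v : M} (hv : v ∈ B.orthogonal W) :
    W ⊔ Submodule.span R {v} ≤ B.orthogonal (W ⊔ Submodule.span R {v}) := by
  intro m hm x hx
  obtain ⟨w, hw, _, hz, rfl⟩ := Submodule.mem_sup.mp hm
  obtain ⟨w', hw', _, hz', rfl⟩ := Submodule.mem_sup.mp hx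
  obtain ⟨c, rfl⟩ := Submodule.mem_span_singleton.mp hz
  obtain ⟨c', rfl⟩ := Submodule.mem_span_singleton.mp hz'
  simp only [map_add, map_smul, LinearMap.add_apply, LinearMap.smul_apply, smul_eq_mul,
    hW hw w' hw', hv w' hw', hB.isRefl _ _ (hv w hw), hB.self_eq_zero]
  ring

theorem exists_le_orthogonal_eq_self [IsNoetherian R M] (hB : B.IsAlt) {W : Submodule R M}
    (hW : W ≤ B.orthogonal W) : ∃ L, W ≤ L ∧ B.orthogonal L = L := by
  induction W using WellFoundedGT.induction with
  | _ W ih =>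
    by_cases hWL : B.orthogonal W ≤ W
    · exact ⟨W, le_rfl, le_antisymm hWL hW⟩
    obtain ⟨v, hv, hvW⟩ := Set.not_subset.mp hWL
    have hlt : W < W ⊔ Submodule.span R {v} :=
      left_lt_sup.mpr fun h => hvW (h (Submodule.mem_span_singleton_self v))
    obtain ⟨L, hL, hLL⟩ := ih _ hlt (sup_span_singleton_le_orthogonal hB hW hv)
    exact ⟨L, hlt.le.trans hL, hLL⟩

end LinearMap.BilinForm

section Symplectic

def sympForm (d n : ℕ) : LinearMap.BilinForm (ZMod d) (PS d n) :=
  LinearMap.mk₂ (ZMod d) symp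
    (fun a a' b => by simp [symp, dotZ, add_mul, mul_add, Finset.sum_add_distrib]; ring)
    (fun c a b => by simp [symp, dotZ, Finset.mul_sum, mul_sub, mul_assoc, mul_left_comm])
    (fun a b b' => by simp [symp, dotZ, add_mul, mul_add, Finset.sum_add_distrib]; ring)
    (fun c a b => by simp [symp, dotZ, Finset.mul_sum, mul_sub, mul_assoc, mul_left_comm])

variable {d n : ℕ}

@[simp] theorem sympForm_apply (a b : PS d n) : sympForm d n a b = symp a b := rfl

theorem sympForm_isAlt : (sympForm d n).IsAlt := fun a => sub_self (dotZ a.1 a.2)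

theorem sympForm_nondegenerate : (sympForm d n).Nondegenerate := by
  refine (sympForm_isAlt (d := d) (n := n)).isRefl.nondegenerate_iff_separatingLeft.mpr
    fun a ha => Prod.ext ?_ ?_
  · funext i
    simpa [symp, dotZ, Pi.single_apply] using ha (0, Pi.single i 1)
  · funext i
    simpa [symp, dotZ, Pi.single_apply] using ha (Pi.single i 1, 0)

theorem exists_symp_ne_zero [Nontrivial (ZMod d)] (hn : 1 ≤ n) :
    ∃ a b : PS d n, symp a b ≠ 0 :=
  ⟨(Pi.single ⟨0, hn⟩ 1, 0), (0, Pi.single ⟨0, hn⟩ 1),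
    by simp [symp, dotZ, Pi.single_apply]⟩

variable [Fact d.Prime]

theorem isLagrangian_of_orthogonal_eq_self {L : Submodule (ZMod d) (PS d n)}
    (hL : (sympForm d n).orthogonal L = L) : IsLagrangian d n L := by
  refine ⟨fun a ha b hb => hL.ge hb a ha, ?_⟩
  have hperp := LinearMap.BilinForm.finrank_orthogonal sympForm_nondegenerate L
  have hle := Submodule.finrank_le L
  rw [hL, finrank_prod, finrank_fin_fun] at hperp
  rw [finrank_prod, finrank_fin_fun] at hle
  omega

theorem exists_isLagrangian_of_symp_eq_zero {a b : PS d n} (hab : symp a b = 0) :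
    ∃ L, a ∈ L ∧ b ∈ L ∧ IsLagrangian d n L := by
  have hiso : Submodule.span (ZMod d) {a, b} ≤
      (sympForm d n).orthogonal (Submodule.span (ZMod d) {a, b}) := by
    have hba : symp b a = 0 := sympForm_isAlt.isRefl a b hab
    have hself : ∀ x : PS d n, symp x x = 0 := sympForm_isAlt.self_eq_zero
    intro x hx y hy
    obtain ⟨c, c', rfl⟩ := Submodule.mem_span_pair.mp hx
    obtain ⟨e, e', rfl⟩ := Submodule.mem_span_pair.mp hy
    simp only [map_add, map_smul, LinearMap.add_apply, LinearMap.smul_apply, sympForm_apply,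
      hab, hba, hself, smul_zero, add_zero]
  obtain ⟨L, hL, hLL⟩ := LinearMap.BilinForm.exists_le_orthogonal_eq_self sympForm_isAlt hiso
  exact ⟨L, hL (Submodule.subset_span (by simp)), hL (Submodule.subset_span (by simp)),
    isLagrangian_of_orthogonal_eq_self hLL⟩

theorem symp_apply_eq_zero_of_isLagrangian_map {R : PS d n →ₗ[ZMod d] PS d n}
    (hR : ∀ L, IsLagrangian d n L → IsLagrangian d n (L.map R)) {a b : PS d n}
    (hab : symp a b = 0) : symp (R a) (R b) = 0 := by
  obtain ⟨L, haL, hbL, hL⟩ := exists_isLagrangian_of_symp_eq_zero hab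
  exact (hR L hL).1 _ (Submodule.mem_map_of_mem haL) _ (Submodule.mem_map_of_mem hbL)

end Symplectic

/-- If an invertible linear map `R` on `(ℤ/d)^{2n}` maps Lagrangian subspaces to
Lagrangian subspaces, then it preserves symplectic orthogonality, and hence is a
symplectic similitude. -/
theorem lagrangian_preserving_is_similitude (d n : ℕ) [Fact d.Prime] (hn : 1 ≤ n)
    (R : PS d n →ₗ[ZMod d] PS d n) (hbij : Function.Bijective R)
    (hLag : ∀ L : Submodule (ZMod d) (PS d n),
      IsLagrangian d n L → IsLagrangian d n (L.map R)) :
    (∀ a b : PS d n, symp a b = 0 ↔ symp (R a) (R b) = 0) ∧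
    ∃ α : ZMod d, α ≠ 0 ∧ ∀ a b : PS d n, symp (R a) (R b) = α * symp a b := by
  have horth : ∀ a b, symp a b = 0 → symp (R a) (R b) = 0 :=
    fun _ _ => symp_apply_eq_zero_of_isLagrangian_map hLag
  obtain ⟨α, hα⟩ := LinearMap.exists_eq_smul_of_forall_apply_eq_zero_imp
    (B := sympForm d n) (B' := (sympForm d n).compl₁₂ R R) horth
  have hsim : ∀ a b, symp (R a) (R b) = α * symp a b :=
    fun a b => by simpa using LinearMap.congr_fun₂ hα a b
  have hα0 : α ≠ 0 := by
    rintro rfl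
    obtain ⟨x, y, hxy⟩ := exists_symp_ne_zero (d := d) hn
    obtain ⟨a, rfl⟩ := hbij.2 x
    obtain ⟨b, rfl⟩ := hbij.2 y
    exact hxy (by simpa using hsim a b)
  refine ⟨fun a b => ⟨horth a b, fun h => ?_⟩, α, hα0, hsim⟩
  rwa [hsim, mul_eq_zero, or_iff_right hα0] at h
end

section
/- Let Q be a subset of Hermitian operators on a finite-dimensional Hilbert space. Every bijection of Q that extends to a map on conv(Q) commuting with convex combinations extends further to a map on aff(Q) commuting with affine combinations. Hence the Kadison symmetry group of Q equals its affine symmetry group. -/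
/-!
A map `K` commuting with convex combinations of points of `Q` preserves every affine dependence
`∑ γᵢ qᵢ = 0`, `∑ γᵢ = 0` among them: splitting `γ = γ⁺ - γ⁻` turns the dependence into an equality
of two nonnegative combinations of equal total weight, and after normalising both sides are the same
convex combination, on which `K` is already known. Hence the value `∑ αᵢ K(qᵢ)` at an affine
combination `∑ αᵢ qᵢ` does not depend on the chosen representation, and defines the extension.
-/

open Finset

def CommutesWithConvexCombinations (𝕜 : Type*) {E F : Type*} [Semiring 𝕜] [PartialOrder 𝕜]
    [AddCommMonoid E] [Module 𝕜 E] [AddCommMonoid F] [Module 𝕜 F] (Q : Set E) (K : E → F) :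
    Prop :=
  ∀ (k : ℕ) (q : Fin k → E) (p : Fin k → 𝕜), (∀ i, q i ∈ Q) → (∀ i, 0 ≤ p i) → ∑ i, p i = 1 →
    K (∑ i, p i • q i) = ∑ i, p i • K (q i)

namespace CommutesWithConvexCombinations

section

variable {𝕜 E F ι : Type*} [Semiring 𝕜] [PartialOrder 𝕜] [AddCommMonoid E] [Module 𝕜 E]
  [AddCommMonoid F] [Module 𝕜 F] {Q : Set E} {K : E → F} [Fintype ι]

theorem map_sum_smul (hK : CommutesWithConvexCombinations 𝕜 Q K) (q : ι → E) (p : ι → 𝕜)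
    (hq : ∀ i, q i ∈ Q) (hp : ∀ i, 0 ≤ p i) (hp₁ : ∑ i, p i = 1) :
    K (∑ i, p i • q i) = ∑ i, p i • K (q i) := by
  let e := (Fintype.equivFin ι).symm
  simpa only [Equiv.sum_comp e (fun i => p i • q i), Equiv.sum_comp e (fun i => p i • K (q i))]
    using hK _ (fun i => q (e i)) (fun i => p (e i)) (fun i => hq _) (fun i => hp _)
      (by rwa [Equiv.sum_comp e p])

end

variable {𝕜 E F ι κ : Type*} [Field 𝕜] [LinearOrder 𝕜] [IsStrictOrderedRing 𝕜]
  [AddCommGroup E] [Module 𝕜 E] [AddCommGroup F] [Module 𝕜 F] {Q : Set E} {K : E → F}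
  [Fintype ι] [Fintype κ]

theorem sum_smul_map_eq_smul_map_centerMass (hK : CommutesWithConvexCombinations 𝕜 Q K)
    (q : ι → E) (p : ι → 𝕜) (hq : ∀ i, q i ∈ Q) (hp : ∀ i, 0 ≤ p i) :
    ∑ i, p i • K (q i) = (∑ i, p i) • K (univ.centerMass p q) := by
  rcases (sum_nonneg fun i _ => hp i).eq_or_lt with hzero | hpos
  · have hp₀ : ∀ i, p i = 0 := fun i =>
      (sum_eq_zero_iff_of_nonneg fun i _ => hp i).mp hzero.symm i (mem_univ i)
    simp [hp₀]
  · have hnormalized : ∑ i, ((∑ j, p j)⁻¹ * p i) = 1 := by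
      rw [← mul_sum, inv_mul_cancel₀ hpos.ne']
    have hmap := hK.map_sum_smul q _ hq (fun i => mul_nonneg (inv_nonneg.mpr hpos.le) (hp i))
      hnormalized
    simp only [← smul_smul, ← smul_sum] at hmap
    rw [centerMass, hmap, smul_inv_smul₀ hpos.ne']

theorem sum_smul_map_eq_zero (hK : CommutesWithConvexCombinations 𝕜 Q K) (q : ι → E)
    (γ : ι → 𝕜) (hq : ∀ i, q i ∈ Q) (hγ : ∑ i, γ i = 0) (hγq : ∑ i, γ i • q i = 0) :
    ∑ i, γ i • K (q i) = 0 := by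
  rw [← posPart_sub_negPart γ] at hγ hγq ⊢
  simp only [Pi.sub_apply, sub_smul, sum_sub_distrib, sub_eq_zero, Pi.posPart_apply,
    Pi.negPart_apply] at hγ hγq ⊢
  rw [hK.sum_smul_map_eq_smul_map_centerMass q _ hq fun i => posPart_nonneg (γ i),
    hK.sum_smul_map_eq_smul_map_centerMass q _ hq fun i => negPart_nonneg (γ i),
    centerMass, centerMass, hγ, hγq]

theorem sum_smul_map_eq_of_sum_smul_eq (hK : CommutesWithConvexCombinations 𝕜 Q K)
    (q : ι → E) (r : κ → E) (α : ι → 𝕜) (β : κ → 𝕜) (hq : ∀ i, q i ∈ Q) (hr : ∀ j, r j ∈ Q)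
    (hαβ : ∑ i, α i = ∑ j, β j) (hqr : ∑ i, α i • q i = ∑ j, β j • r j) :
    ∑ i, α i • K (q i) = ∑ j, β j • K (r j) := by
  have hzero := hK.sum_smul_map_eq_zero (Sum.elim q r) (Sum.elim α (-β))
    (by rintro (i | j) <;> simp [hq, hr]) (by simp [Fintype.sum_sum_type, hαβ])
    (by simp [Fintype.sum_sum_type, hqr])
  simpa [Fintype.sum_sum_type, ← sub_eq_add_neg, sub_eq_zero] using hzero

end CommutesWithConvexCombinations

section

variable (𝕜 : Type*) {E F : Type*} [Semiring 𝕜] [AddCommMonoid E] [Module 𝕜 E]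
  [AddCommMonoid F] [Module 𝕜 F] (Q : Set E) (K : E → F)

def IsAffineCombinationImage (x : E) (y : F) : Prop :=
  ∃ (ι : Type) (_ : Fintype ι) (q : ι → E) (α : ι → 𝕜),
    (∀ i, q i ∈ Q) ∧ ∑ i, α i = 1 ∧ ∑ i, α i • q i = x ∧ ∑ i, α i • K (q i) = y

/-- Off the affine hull of `Q` this is an arbitrary junk value. -/
noncomputable def affineExtension (x : E) : F :=
  Classical.epsilon (IsAffineCombinationImage 𝕜 Q K x)

end

namespace CommutesWithConvexCombinations

variable {𝕜 E F : Type*} [Field 𝕜] [LinearOrder 𝕜] [IsStrictOrderedRing 𝕜]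
  [AddCommGroup E] [Module 𝕜 E] [AddCommGroup F] [Module 𝕜 F] {Q : Set E} {K : E → F}

theorem affineExtension_sum_smul (hK : CommutesWithConvexCombinations 𝕜 Q K) {ι : Type}
    [Fintype ι] (q : ι → E) (α : ι → 𝕜) (hq : ∀ i, q i ∈ Q) (hα : ∑ i, α i = 1) :
    affineExtension 𝕜 Q K (∑ i, α i • q i) = ∑ i, α i • K (q i) := by
  obtain ⟨κ, _, r, β, hr, hβ, hrq, hvalue⟩ :=
    Classical.epsilon_spec (p := IsAffineCombinationImage 𝕜 Q K _)
      ⟨_, ι, inferInstance, q, α, hq, hα, rfl, rfl⟩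
  rw [affineExtension, ← hvalue]
  exact hK.sum_smul_map_eq_of_sum_smul_eq r q β α hr hq (hβ.trans hα.symm) hrq

theorem affineExtension_eqOn_convexHull (hK : CommutesWithConvexCombinations 𝕜 Q K) :
    Set.EqOn (affineExtension 𝕜 Q K) K (convexHull 𝕜 Q) := by
  intro x hx
  obtain ⟨ι, _, w, z, hw₀, hw₁, hz, rfl⟩ := mem_convexHull_iff_exists_fintype.mp hx
  rw [hK.affineExtension_sum_smul z w hz hw₁, hK.map_sum_smul z w hz hw₀ hw₁]

end CommutesWithConvexCombinations

theorem kadison_eq_affine_general {m : ℕ} (Q : Set (Matrix (Fin m) (Fin m) ℂ))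
    (K : Matrix (Fin m) (Fin m) ℂ → Matrix (Fin m) (Fin m) ℂ)
    (hconv : ∀ (k : ℕ) (q : Fin k → Matrix (Fin m) (Fin m) ℂ) (p : Fin k → ℝ),
      (∀ i, q i ∈ Q) → (∀ i, 0 ≤ p i) → ∑ i, p i = 1 →
      K (∑ i, p i • q i) = ∑ i, p i • K (q i)) :
    ∃ Λ : Matrix (Fin m) (Fin m) ℂ → Matrix (Fin m) (Fin m) ℂ,
      Set.EqOn Λ K (convexHull ℝ Q) ∧
      ∀ (k : ℕ) (q : Fin k → Matrix (Fin m) (Fin m) ℂ) (α : Fin k → ℝ),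
        (∀ i, q i ∈ Q) → ∑ i, α i = 1 →
        Λ (∑ i, α i • q i) = ∑ i, α i • Λ (q i) := by
  have hK : CommutesWithConvexCombinations ℝ Q K := hconv
  refine ⟨affineExtension ℝ Q K, hK.affineExtension_eqOn_convexHull, fun k q α hq hα => ?_⟩
  rw [hK.affineExtension_sum_smul q α hq hα]
  exact sum_congr rfl fun i _ => by
    rw [hK.affineExtension_eqOn_convexHull (subset_convexHull ℝ Q (hq i))]

/-- Kadison symmetries are affine symmetries: a bijection of a set `Q` of Hermitian
operators that extends to the convex hull commuting with convex combinations extends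
further to a map commuting with affine combinations, agreeing with the original one
on the convex hull. -/
theorem kadison_eq_affine {m : ℕ} (Q : Set (Matrix (Fin m) (Fin m) ℂ))
    (hQ : ∀ A ∈ Q, A.IsHermitian)
    (K : Matrix (Fin m) (Fin m) ℂ → Matrix (Fin m) (Fin m) ℂ)
    (hbij : Set.BijOn K Q Q)
    (hconv : ∀ (k : ℕ) (q : Fin k → Matrix (Fin m) (Fin m) ℂ) (p : Fin k → ℝ),
      (∀ i, q i ∈ Q) → (∀ i, 0 ≤ p i) → ∑ i, p i = 1 →
      K (∑ i, p i • q i) = ∑ i, p i • K (q i)) :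
    ∃ Λ : Matrix (Fin m) (Fin m) ℂ → Matrix (Fin m) (Fin m) ℂ,
      Set.EqOn Λ K (convexHull ℝ Q) ∧
      ∀ (k : ℕ) (q : Fin k → Matrix (Fin m) (Fin m) ℂ) (α : Fin k → ℝ),
        (∀ i, q i ∈ Q) → ∑ i, α i = 1 →
        Λ (∑ i, α i • q i) = ∑ i, α i • Λ (q i) :=
  kadison_eq_affine_general Q K hconv
end

section
/- Let Q be a finite set of Hermitian operators on a finite-dimensional Hilbert space, and let W : Q → Q be a bijection preserving the Hilbert-Schmidt inner product: tr(W(q₁)W(q₂)) = tr(q₁q₂) for all q₁, q₂ ∈ Q. Then W extends to a linear map on span(Q), i.e., every Wigner symmetry is a linear symmetry. -/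
open Matrix

/-!
Extend `W` along the linear-combination map `(Q →₀ ℝ) → span Q`. This is possible because a
relation `∑ c_q q = 0` forces `D = ∑ c_q W q` to satisfy `tr (D D) = tr ((∑ c_q q)²) = 0`, and `D`,
a real combination of Hermitian matrices, is Hermitian, so `tr (D D) = tr (Dᴴ D) = 0` gives `D = 0`.
-/

theorem LinearMap.exists_comp_eq_of_ker_le {K A V E : Type*} [Field K]
    [AddCommGroup A] [Module K A] [AddCommGroup V] [Module K V] [AddCommGroup E] [Module K E]
    (f : A →ₗ[K] V) (g : A →ₗ[K] E) (h : LinearMap.ker f ≤ LinearMap.ker g) :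
    ∃ L : V →ₗ[K] E, L ∘ₗ f = g := by
  obtain ⟨L, hL⟩ := LinearMap.exists_extend
    ((LinearMap.ker f).liftQ g h ∘ₗ f.quotKerEquivRange.symm.toLinearMap)
  refine ⟨L, LinearMap.ext fun a => ?_⟩
  have := LinearMap.congr_fun hL ⟨f a, LinearMap.mem_range_self f a⟩
  simpa [LinearMap.quotKerEquivRange_symm_apply_image] using this

theorem exists_linearMap_eqOn_of_preserves_form {K V E M : Type*} [Field K]
    [AddCommGroup V] [Module K V] [AddCommGroup E] [Module K E] [AddCommGroup M] [Module K M]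
    (β : V →ₗ[K] V →ₗ[K] M) (β' : E →ₗ[K] E →ₗ[K] M) {Q : Set V} {W : V → E}
    (hW : ∀ x ∈ Q, ∀ y ∈ Q, β' (W x) (W y) = β x y)
    (hβ' : ∀ D ∈ Submodule.span K (W '' Q), β' D D = 0 → D = 0) :
    ∃ L : V →ₗ[K] E, Set.EqOn L W Q := by
  set f := Finsupp.linearCombination K ((↑) : Q → V)
  set g := Finsupp.linearCombination K (W ∘ ((↑) : Q → V))
  have hgram : β'.compl₁₂ g g = β.compl₁₂ f f :=
    Finsupp.lhom_ext fun x a => Finsupp.lhom_ext fun y b => by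
      simp [f, g, hW x x.2 y y.2]
  have hker : LinearMap.ker f ≤ LinearMap.ker g := fun c hc => by
    have hc' : β' (g c) (g c) = 0 := by
      simpa [LinearMap.mem_ker.mp hc] using LinearMap.congr_fun₂ hgram c c
    refine hβ' _ ?_ hc'
    rw [Set.image_eq_range, ← Finsupp.range_linearCombination]
    exact LinearMap.mem_range_self g c
  obtain ⟨L, hL⟩ := LinearMap.exists_comp_eq_of_ker_le f g hker
  refine ⟨L, fun q hq => ?_⟩
  simpa [f, g] using LinearMap.congr_fun hL (Finsupp.single ⟨q, hq⟩ 1)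

theorem Matrix.IsHermitian.eq_zero_of_trace_mul_self_eq_zero {n R : Type*} [Fintype n]
    [PartialOrder R] [NonUnitalRing R] [StarRing R] [StarOrderedRing R] [NoZeroDivisors R]
    {A : Matrix n n R} (hA : A.IsHermitian) (h : (A * A).trace = 0) : A = 0 := by
  rw [← trace_conjTranspose_mul_self_eq_zero_iff, hA.eq, h]

theorem wigner_subset_linear_general {m : ℕ} (Q : Set (Matrix (Fin m) (Fin m) ℂ))
    (hQ : ∀ A ∈ Q, A.IsHermitian)
    (W : Matrix (Fin m) (Fin m) ℂ → Matrix (Fin m) (Fin m) ℂ)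
    (hbij : Set.BijOn W Q Q)
    (hW : ∀ q₁ ∈ Q, ∀ q₂ ∈ Q, (W q₁ * W q₂).trace = (q₁ * q₂).trace) :
    ∃ L : Matrix (Fin m) (Fin m) ℂ →ₗ[ℝ] Matrix (Fin m) (Fin m) ℂ,
      Set.EqOn (⇑L) W Q := by
  let τ := (LinearMap.mul ℝ (Matrix (Fin m) (Fin m) ℂ)).compr₂ (traceLinearMap (Fin m) ℝ ℂ)
  refine exists_linearMap_eqOn_of_preserves_form τ τ hW fun D hD hDD => ?_
  have hspan : Submodule.span ℝ (W '' Q) ≤ selfAdjoint.submodule ℝ _ :=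
    Submodule.span_le.mpr <| by
      rintro _ ⟨q, hq, rfl⟩
      exact hQ _ (hbij.mapsTo hq)
  open ComplexOrder in exact IsHermitian.eq_zero_of_trace_mul_self_eq_zero (hspan hD) hDD

/-- Every Wigner symmetry of a finite set of Hermitian operators (a bijection of `Q`
preserving the Hilbert-Schmidt inner product) extends to a linear map on `span(Q)`. -/
theorem wigner_subset_linear {m : ℕ} (Q : Set (Matrix (Fin m) (Fin m) ℂ))
    (hfin : Q.Finite) (hQ : ∀ A ∈ Q, A.IsHermitian)
    (W : Matrix (Fin m) (Fin m) ℂ → Matrix (Fin m) (Fin m) ℂ)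
    (hbij : Set.BijOn W Q Q)
    (hW : ∀ q₁ ∈ Q, ∀ q₂ ∈ Q, (W q₁ * W q₂).trace = (q₁ * q₂).trace) :
    ∃ L : Matrix (Fin m) (Fin m) ℂ →ₗ[ℝ] Matrix (Fin m) (Fin m) ℂ,
      Set.EqOn (⇑L) W Q :=
  wigner_subset_linear_general Q hQ W hbij hW
end
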